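/- Let C be a closed convex subset of a Hilbert space H and T : C → C nonexpansive with F(T) ≠ ∅. Let α_n ∈ (0,1) with α_n ≤ 1 − δ for some δ ∈ (0,1]. Define x₀ ∈ C, y_n = α_n x_n + (1−α_n)Tx_n, C_n = {v ∈ C : ‖y_n − v‖ ≤ ‖x_n − v‖}, Q_n = {v ∈ C : ⟨x₀ − x_n, x_n − v⟩ ≥ 0}, x_{n+1} = P_{C_n ∩ Q_n} x₀. Then x_n converges strongly to P_{F(T)} x₀. -/

import Mathlib

/-
The iterates satisfy `⟪x₀ - xₙ, xₙ - v⟫ ≥ 0` on `Qₙ`, and `F(T) ⊆ Cₙ ∩ Qₙ` by induction, the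
inductive step being the variational characterisation of `xₙ₊₁` as the projection of `x₀` onto
`Cₙ ∩ Qₙ`. Hence `‖x₀ - xₙ‖` increases to some `A ≤ dist x₀ F(T)`, `‖xₙ - xₙ₊₁‖ → 0`, and
`xₙ₊₁ ∈ Cₙ` gives `δ ‖xₙ - T xₙ‖ ≤ ‖xₙ - yₙ‖ ≤ 2 ‖xₙ - xₙ₊₁‖`, so `‖xₙ - T xₙ‖ → 0`.
The Riesz representation theorem gives a weak limit `w` of `xₙ` along an ultrafilter; `w ∈ C`
because closed convex sets are weakly closed, `T w = w` by demiclosedness, and `‖x₀ - w‖ ≤ A`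
because closed balls are weakly closed. So `w = P_{F(T)} x₀`, and
`‖xₙ - w‖² ≤ ‖x₀ - w‖² - ‖x₀ - xₙ‖² → 0`.
-/

open Filter Topology Set
open scoped InnerProductSpace

section Normed

variable {E : Type*} [SeminormedAddCommGroup E]

theorem tendsto_of_norm_sub_sq_add_norm_sub_sq_le {ι : Type*} {l : Filter ι} {x : ι → E}
    {u w : E} (h : ∀ i, ‖u - x i‖ ^ 2 + ‖x i - w‖ ^ 2 ≤ ‖u - w‖ ^ 2)
    (hlim : Tendsto (fun i => ‖u - x i‖) l (𝓝 ‖u - w‖)) : Tendsto x l (𝓝 w) := by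
  have hgap : Tendsto (fun i => ‖u - w‖ ^ 2 - ‖u - x i‖ ^ 2) l (𝓝 0) := by
    have := (tendsto_const_nhds (x := ‖u - w‖ ^ 2)).sub (hlim.pow 2)
    rwa [sub_self] at this
  have hsq : Tendsto (fun i => ‖x i - w‖ ^ 2) l (𝓝 0) :=
    squeeze_zero (fun i => sq_nonneg _) (fun i => by linarith [h i]) hgap
  rw [tendsto_iff_norm_sub_tendsto_zero]
  simpa using hsq.sqrt

variable [NormedSpace ℝ E]

theorem norm_smul_add_smul_sub_le {x z p : E} {α : ℝ} (hα₀ : 0 ≤ α) (hα₁ : α ≤ 1)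
    (h : ‖z - p‖ ≤ ‖x - p‖) : ‖α • x + (1 - α) • z - p‖ ≤ ‖x - p‖ :=
  mem_closedBall_iff_norm.1 <| convex_closedBall p ‖x - p‖ (mem_closedBall_iff_norm.2 le_rfl)
    (mem_closedBall_iff_norm.2 h) hα₀ (sub_nonneg.2 hα₁) (add_sub_cancel _ _)

theorem mul_norm_sub_le_of_norm_smul_add_smul_sub_le {x z x' : E} {α δ : ℝ} (hδ : 0 ≤ δ)
    (hαδ : α ≤ 1 - δ) (h : ‖α • x + (1 - α) • z - x'‖ ≤ ‖x - x'‖) :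
    δ * ‖x - z‖ ≤ 2 * ‖x - x'‖ := by
  have hstep : x - (α • x + (1 - α) • z) = (1 - α) • (x - z) := by module
  calc δ * ‖x - z‖ ≤ (1 - α) * ‖x - z‖ := by gcongr; linarith
    _ = ‖x - (α • x + (1 - α) • z)‖ := by
        rw [hstep, norm_smul, Real.norm_of_nonneg (by linarith)]
    _ ≤ ‖x - x'‖ + ‖x' - (α • x + (1 - α) • z)‖ := norm_sub_le_norm_sub_add_norm_sub _ _ _
    _ ≤ 2 * ‖x - x'‖ := by rw [norm_sub_rev x']; linarith

theorem tendsto_norm_sub_apply_of_tendsto_norm_sub_succ {x : ℕ → E} {T : E → E} {α : ℕ → ℝ}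
    {δ : ℝ} (hδ : 0 < δ) (hαδ : ∀ n, α n ≤ 1 - δ)
    (hstep : ∀ n, ‖α n • x n + (1 - α n) • T (x n) - x (n + 1)‖ ≤ ‖x n - x (n + 1)‖)
    (hx : Tendsto (fun n => ‖x n - x (n + 1)‖) atTop (𝓝 0)) :
    Tendsto (fun n => ‖x n - T (x n)‖) atTop (𝓝 0) := by
  refine squeeze_zero (fun n => norm_nonneg _) (fun n => ?_) (by simpa using hx.const_mul (2 / δ))
  rw [div_mul_eq_mul_div, le_div_iff₀ hδ, mul_comm]
  exact mul_norm_sub_le_of_norm_smul_add_smul_sub_le hδ.le (hαδ n) (hstep n)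

end Normed

section Hilbert

variable {H : Type*} [NormedAddCommGroup H] [InnerProductSpace ℝ H]

theorem convex_setOf_norm_sub_le_norm_sub (x y : H) : Convex ℝ {v | ‖y - v‖ ≤ ‖x - v‖} := by
  have hset : {v | ‖y - v‖ ≤ ‖x - v‖} = {v | ⟪x - y, v⟫_ℝ ≤ (‖x‖ ^ 2 - ‖y‖ ^ 2) / 2} := by
    ext v
    simp only [mem_ofPred_eq]
    rw [← sq_le_sq₀ (norm_nonneg _) (norm_nonneg _), norm_sub_sq_real, norm_sub_sq_real,
      inner_sub_left]
    constructor <;> intro h <;> linarith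
  rw [hset]
  exact convex_halfSpace_le (innerₛₗ ℝ (x - y)).isLinear _

theorem convex_setOf_inner_sub_nonneg (a b : H) : Convex ℝ {v | ⟪a, b - v⟫_ℝ ≥ 0} := by
  have hset : {v | ⟪a, b - v⟫_ℝ ≥ 0} = {v | ⟪a, v⟫_ℝ ≤ ⟪a, b⟫_ℝ} := by
    ext v
    simp only [mem_ofPred_eq, inner_sub_right, ge_iff_le, sub_nonneg]
  rw [hset]
  exact convex_halfSpace_le (innerₛₗ ℝ a).isLinear _

theorem norm_sub_sq_add_norm_sub_sq_le {u x v : H} (h : ⟪u - x, x - v⟫_ℝ ≥ 0) :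
    ‖u - x‖ ^ 2 + ‖x - v‖ ^ 2 ≤ ‖u - v‖ ^ 2 := by
  rw [← sub_add_sub_cancel u x v, norm_add_sq_real]
  linarith

theorem norm_sub_le_norm_sub_of_inner_nonneg {u x v : H} (h : ⟪u - x, x - v⟫_ℝ ≥ 0) :
    ‖u - x‖ ≤ ‖u - v‖ := by
  rw [← sq_le_sq₀ (norm_nonneg _) (norm_nonneg _)]
  nlinarith [norm_sub_sq_add_norm_sub_sq_le h, sq_nonneg ‖x - v‖]

theorem real_inner_sub_nonpos_of_forall_norm_sub_le {K : Set H} (hK : Convex ℝ K) {u p : H}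
    (hp : p ∈ K) (hmin : ∀ v ∈ K, ‖u - p‖ ≤ ‖u - v‖) {v : H} (hv : v ∈ K) :
    ⟪u - p, v - p⟫_ℝ ≤ 0 := by
  have : Nonempty K := ⟨⟨p, hp⟩⟩
  refine (norm_eq_iInf_iff_real_inner_le_zero hK hp).1 (le_antisymm ?_ ?_) v hv
  · exact le_ciInf fun w => hmin w w.2
  · exact ciInf_le ⟨0, forall_mem_range.2 fun w : K => norm_nonneg (u - (w : H))⟩ (⟨p, hp⟩ : K)

theorem monotone_norm_sub_of_inner_nonneg {x : ℕ → H} {u : H}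
    (h : ∀ n, ⟪u - x n, x n - x (n + 1)⟫_ℝ ≥ 0) : Monotone fun n => ‖u - x n‖ :=
  monotone_nat_of_le_succ fun n => norm_sub_le_norm_sub_of_inner_nonneg (h n)

theorem tendsto_norm_sub_succ_of_inner_nonneg {x : ℕ → H} {u : H}
    (h : ∀ n, ⟪u - x n, x n - x (n + 1)⟫_ℝ ≥ 0) (hbdd : BddAbove (range fun n => ‖u - x n‖)) :
    Tendsto (fun n => ‖x n - x (n + 1)‖) atTop (𝓝 0) := by
  have hlim := (tendsto_atTop_ciSup (monotone_norm_sub_of_inner_nonneg h) hbdd).pow 2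
  have hgap : Tendsto (fun n => ‖u - x (n + 1)‖ ^ 2 - ‖u - x n‖ ^ 2) atTop (𝓝 0) := by
    simpa using (hlim.comp (tendsto_add_atTop_nat 1)).sub hlim
  have hsq : Tendsto (fun n => ‖x n - x (n + 1)‖ ^ 2) atTop (𝓝 0) :=
    squeeze_zero (fun n => sq_nonneg _)
      (fun n => by linarith [norm_sub_sq_add_norm_sub_sq_le (h n)]) hgap
  simpa using hsq.sqrt

end Hilbert

section WeakLimit

variable {H : Type*} [NormedAddCommGroup H] [InnerProductSpace ℝ H] {ι : Type*}

def TendstoWeakly (x : ι → H) (l : Filter ι) (w : H) : Prop :=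
  ∀ z, Tendsto (fun i => ⟪x i, z⟫_ℝ) l (𝓝 ⟪w, z⟫_ℝ)

theorem exists_tendstoWeakly_of_isBounded [CompleteSpace H] (U : Ultrafilter ι) {x : ι → H}
    (hx : Bornology.IsBounded (range x)) : ∃ w, TendstoWeakly x U w := by
  obtain ⟨M, hM⟩ := hx.exists_norm_le
  have hbound : ∀ z i, |⟪x i, z⟫_ℝ| ≤ M * ‖z‖ := fun z i =>
    (abs_real_inner_le_norm _ _).trans (by gcongr; exact hM _ (mem_range_self i))
  have hlim : ∀ z, ∃ c, Tendsto (fun i => ⟪x i, z⟫_ℝ) U (𝓝 c) := fun z => by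
    obtain ⟨c, -, hc⟩ := (isCompact_Icc (a := -(M * ‖z‖)) (b := M * ‖z‖)).ultrafilter_le_nhds
      (U.map fun i => ⟪x i, z⟫_ℝ)
      (le_principal_iff.2 <| Ultrafilter.mem_map.2 <|
        Eventually.of_forall fun i => abs_le.1 (hbound z i))
    exact ⟨c, hc⟩
  choose ℓ hℓ using hlim
  let L : H →ₗ[ℝ] ℝ :=
    { toFun := ℓ
      map_add' := fun z z' => tendsto_nhds_unique (hℓ (z + z'))
        (by simpa only [inner_add_right] using (hℓ z).add (hℓ z'))
      map_smul' := fun c z => tendsto_nhds_unique (hℓ (c • z))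
        (by simpa only [real_inner_smul_right, smul_eq_mul, RingHom.id_apply] using
          (hℓ z).const_mul c) }
  have hL : ∀ z, ‖L z‖ ≤ M * ‖z‖ := fun z =>
    le_of_tendsto (hℓ z).abs (.of_forall (hbound z))
  refine ⟨(InnerProductSpace.toDual ℝ H).symm (L.mkContinuous M hL), fun z => ?_⟩
  rw [InnerProductSpace.toDual_symm_apply]
  exact hℓ z

namespace TendstoWeakly

variable {l : Filter ι} {x : ι → H} {w : H}

theorem tendsto_norm_sub_sq_sub_norm_sub_sq (hw : TendstoWeakly x l w) (z : H) :
    Tendsto (fun i => ‖x i - z‖ ^ 2 - ‖x i - w‖ ^ 2) l (𝓝 (‖w - z‖ ^ 2)) := by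
  have hexp : ∀ y, ‖y - z‖ ^ 2 - ‖y - w‖ ^ 2 = 2 * (⟪y, w - z⟫_ℝ - ⟪w, w - z⟫_ℝ) + ‖w - z‖ ^ 2 :=
    fun y => by
      rw [← sub_add_sub_cancel y w z, norm_add_sq_real, ← inner_sub_left]
      ring
  simp only [hexp]
  simpa using (((hw (w - z)).sub_const ⟪w, w - z⟫_ℝ).const_mul 2).add_const (‖w - z‖ ^ 2)

theorem mem [CompleteSpace H] [l.NeBot] (hw : TendstoWeakly x l w) {K : Set H}
    (hKc : IsClosed K) (hK : Convex ℝ K) (hx : ∀ᶠ i in l, x i ∈ K) : w ∈ K := by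
  obtain ⟨i, hi⟩ := hx.exists
  obtain ⟨p, hp, hpmin⟩ := exists_norm_eq_iInf_of_complete_convex ⟨x i, hi⟩ hKc.isComplete hK w
  have hproj := (norm_eq_iInf_iff_real_inner_le_zero hK hp).1 hpmin
  have hlim : Tendsto (fun i => ⟪x i, w - p⟫_ℝ - ⟪p, w - p⟫_ℝ) l (𝓝 (‖w - p‖ ^ 2)) := by
    rw [← real_inner_self_eq_norm_sq, inner_sub_left]
    exact (hw (w - p)).sub_const _
  have hle : ‖w - p‖ ^ 2 ≤ 0 := le_of_tendsto hlim <| hx.mono fun i hi => by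
    rw [← inner_sub_left, real_inner_comm]
    exact hproj _ hi
  rw [sq_nonpos_iff, norm_eq_zero, sub_eq_zero] at hle
  exact hle ▸ hp

/-- Browder's demiclosedness principle. -/
theorem apply_eq_self [l.NeBot] (hw : TendstoWeakly x l w) {C : Set H} {T : H → H}
    (hne : ∀ u ∈ C, ∀ v ∈ C, ‖T u - T v‖ ≤ ‖u - v‖) (hxC : ∀ i, x i ∈ C) (hwC : w ∈ C)
    (hx : Bornology.IsBounded (range x)) (hTx : Tendsto (fun i => ‖x i - T (x i)‖) l (𝓝 0)) :
    T w = w := by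
  obtain ⟨M, hM⟩ := hx.exists_norm_le
  have hR : ∀ i, ‖x i - w‖ ≤ M + ‖w‖ := fun i =>
    (norm_sub_le _ _).trans (by gcongr; exact hM _ (mem_range_self i))
  have hstep : ∀ i, ‖x i - T w‖ ^ 2 - ‖x i - w‖ ^ 2
      ≤ ‖x i - T (x i)‖ * (‖x i - T (x i)‖ + 2 * (M + ‖w‖)) := fun i => by
    have htri : ‖x i - T w‖ ≤ ‖x i - T (x i)‖ + ‖x i - w‖ :=
      (norm_sub_le_norm_sub_add_norm_sub _ _ _).trans (by gcongr; exact hne _ (hxC i) _ hwC)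
    nlinarith [norm_nonneg (x i - T w), norm_nonneg (x i - T (x i)), norm_nonneg (x i - w), hR i]
  have hbound :
      Tendsto (fun i => ‖x i - T (x i)‖ * (‖x i - T (x i)‖ + 2 * (M + ‖w‖))) l (𝓝 0) := by
    simpa using hTx.mul (hTx.add_const (2 * (M + ‖w‖)))
  have hle :=
    le_of_tendsto_of_tendsto' (hw.tendsto_norm_sub_sq_sub_norm_sub_sq (T w)) hbound hstep
  rw [sq_nonpos_iff, norm_eq_zero, sub_eq_zero] at hle
  exact hle.symm

end TendstoWeakly

end WeakLimit

namespace NakajoTakahashi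

variable {H : Type*} [NormedAddCommGroup H] {C : Set H} {T : H → H} {α : ℕ → ℝ} {x y : ℕ → H}
  {x₀ : H} {Cs Qs : ℕ → Set H}

theorem iterate_mem (hx₀ : x 0 = x₀) (hx₀C : x₀ ∈ C)
    (hCs : ∀ n, Cs n = {v ∈ C | ‖y n - v‖ ≤ ‖x n - v‖})
    (hxproj : ∀ n, x (n + 1) ∈ Cs n ∩ Qs n) : ∀ n, x n ∈ C
  | 0 => hx₀ ▸ hx₀C
  | n + 1 => by
    have hmem := (hxproj n).1
    rw [hCs n] at hmem
    exact hmem.1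

variable [InnerProductSpace ℝ H]

theorem norm_mann_sub_le (hy : ∀ n, y n = α n • x n + (1 - α n) • T (x n))
    (hCs : ∀ n, Cs n = {v ∈ C | ‖y n - v‖ ≤ ‖x n - v‖}) (hxCs : ∀ n, x (n + 1) ∈ Cs n) (n : ℕ) :
    ‖α n • x n + (1 - α n) • T (x n) - x (n + 1)‖ ≤ ‖x n - x (n + 1)‖ := by
  have hmem := hxCs n
  rw [hCs n, hy n] at hmem
  exact hmem.2

theorem fixedPoint_mem_inter (hconv : Convex ℝ C) (hne : ∀ u ∈ C, ∀ v ∈ C, ‖T u - T v‖ ≤ ‖u - v‖)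
    (hα : ∀ n, α n ∈ Ioo (0:ℝ) 1) (hxC : ∀ n, x n ∈ C) (hx₀ : x 0 = x₀)
    (hy : ∀ n, y n = α n • x n + (1 - α n) • T (x n))
    (hCs : ∀ n, Cs n = {v ∈ C | ‖y n - v‖ ≤ ‖x n - v‖})
    (hQs : ∀ n, Qs n = {v ∈ C | (inner ℝ (x₀ - x n) (x n - v) : ℝ) ≥ 0})
    (hxproj : ∀ n, x (n + 1) ∈ Cs n ∩ Qs n ∧
        ∀ v ∈ Cs n ∩ Qs n, ‖x₀ - x (n + 1)‖ ≤ ‖x₀ - v‖)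
    {q : H} (hq : q ∈ C) (hTq : T q = q) : ∀ n, q ∈ Cs n ∩ Qs n := by
  have hqCs : ∀ n, q ∈ Cs n := fun n => by
    rw [hCs n, hy n]
    exact ⟨hq, norm_smul_add_smul_sub_le (hα n).1.le (hα n).2.le
      (by simpa only [hTq] using hne _ (hxC n) _ hq)⟩
  have hconvCQ : ∀ n, Convex ℝ (Cs n ∩ Qs n) := fun n => by
    rw [hCs n, hQs n]
    exact (hconv.inter (convex_setOf_norm_sub_le_norm_sub _ _)).inter
      (hconv.inter (convex_setOf_inner_sub_nonneg _ _))
  intro n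
  induction n with
  | zero =>
    refine ⟨hqCs 0, ?_⟩
    rw [hQs 0, hx₀]
    simpa using hq
  | succ n ih =>
    refine ⟨hqCs (n + 1), ?_⟩
    rw [hQs (n + 1)]
    refine ⟨hq, ?_⟩
    have hvar := real_inner_sub_nonpos_of_forall_norm_sub_le (hconvCQ n) (hxproj n).1
      (hxproj n).2 ih
    rw [← neg_sub q, inner_neg_right]
    linarith

end NakajoTakahashi

theorem nakajo_takahashi_strong_convergence_general
    (H : Type*) [NormedAddCommGroup H] [InnerProductSpace ℝ H] [CompleteSpace H]
    (C : Set H) (hclosed : IsClosed C) (hconv : Convex ℝ C)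
    (T : H → H)
    (hne : ∀ u ∈ C, ∀ v ∈ C, ‖T u - T v‖ ≤ ‖u - v‖)
    (hfix : {q ∈ C | T q = q}.Nonempty)
    (α : ℕ → ℝ) (hα : ∀ n, α n ∈ Set.Ioo (0:ℝ) 1)
    (δ : ℝ) (hδ : δ ∈ Set.Ioc (0:ℝ) 1) (hαδ : ∀ n, α n ≤ 1 - δ)
    (x y : ℕ → H) (x₀ : H) (hx₀ : x 0 = x₀) (hx₀C : x₀ ∈ C)
    (hy : ∀ n, y n = α n • x n + (1 - α n) • T (x n))
    (Cs Qs : ℕ → Set H)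
    (hCs : ∀ n, Cs n = {v ∈ C | ‖y n - v‖ ≤ ‖x n - v‖})
    (hQs : ∀ n, Qs n = {v ∈ C | (inner ℝ (x₀ - x n) (x n - v) : ℝ) ≥ 0})
    (hxproj : ∀ n, x (n + 1) ∈ Cs n ∩ Qs n ∧
        ∀ v ∈ Cs n ∩ Qs n, ‖x₀ - x (n + 1)‖ ≤ ‖x₀ - v‖) :
    ∃ q, (q ∈ C ∧ T q = q) ∧ (∀ p ∈ C, T p = p → ‖x₀ - q‖ ≤ ‖x₀ - p‖) ∧
      Filter.Tendsto x Filter.atTop (nhds q) := by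
  obtain ⟨p, hpC, hpT⟩ := hfix
  have hxC := NakajoTakahashi.iterate_mem hx₀ hx₀C hCs fun n => (hxproj n).1
  have hF : ∀ q ∈ C, T q = q → ∀ n, q ∈ Cs n ∩ Qs n := fun q hq hTq =>
    NakajoTakahashi.fixedPoint_mem_inter hconv hne hα hxC hx₀ hy hCs hQs hxproj hq hTq
  have hQ : ∀ n, ∀ v ∈ Qs n, ⟪x₀ - x n, x n - v⟫_ℝ ≥ 0 := fun n v hv => (hQs n ▸ hv).2
  have hdist : ∀ q ∈ C, T q = q → ∀ n, ‖x₀ - x n‖ ≤ ‖x₀ - q‖ := fun q hq hTq n =>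
    norm_sub_le_norm_sub_of_inner_nonneg (hQ n q (hF q hq hTq n).2)
  have hbdd : BddAbove (range fun n => ‖x₀ - x n‖) := ⟨_, forall_mem_range.2 (hdist p hpC hpT)⟩
  have hstep : ∀ n, ⟪x₀ - x n, x n - x (n + 1)⟫_ℝ ≥ 0 := fun n => hQ n _ (hxproj n).1.2
  have hlim := tendsto_atTop_ciSup (monotone_norm_sub_of_inner_nonneg hstep) hbdd
  set A := ⨆ n, ‖x₀ - x n‖
  have hball : ∀ n, x n ∈ Metric.closedBall x₀ A := fun n => by
    rw [Metric.mem_closedBall, dist_comm, dist_eq_norm]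
    exact le_ciSup hbdd n
  have hbounded : Bornology.IsBounded (range x) :=
    Metric.isBounded_closedBall.subset (range_subset_iff.2 hball)
  have hTx := tendsto_norm_sub_apply_of_tendsto_norm_sub_succ hδ.1 hαδ
    (NakajoTakahashi.norm_mann_sub_le hy hCs fun n => (hxproj n).1.1)
    (tendsto_norm_sub_succ_of_inner_nonneg hstep hbdd)
  obtain ⟨w, hw⟩ := exists_tendstoWeakly_of_isBounded (.of atTop) hbounded
  have hwC := hw.mem hclosed hconv (.of_forall hxC)
  have hwT := hw.apply_eq_self hne hxC hwC hbounded (hTx.mono_left (Ultrafilter.of_le _))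
  have hwA : ‖x₀ - w‖ ≤ A := by
    simpa [dist_eq_norm, norm_sub_rev] using
      hw.mem Metric.isClosed_closedBall (convex_closedBall x₀ A) (.of_forall hball)
  have hAw : A = ‖x₀ - w‖ := le_antisymm (ciSup_le (hdist w hwC hwT)) hwA
  refine ⟨w, ⟨hwC, hwT⟩, fun q hq hTq => hwA.trans (ciSup_le (hdist q hq hTq)), ?_⟩
  exact tendsto_of_norm_sub_sq_add_norm_sub_sq_le
    (fun n => norm_sub_sq_add_norm_sub_sq_le (hQ n w (hF w hwC hwT n).2)) (hAw ▸ hlim)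

/-- Nakajo–Takahashi CQ theorem: strong convergence of the hybrid
Mann projection algorithm for nonexpansive mappings. -/
theorem nakajo_takahashi_strong_convergence
    (H : Type*) [NormedAddCommGroup H] [InnerProductSpace ℝ H] [CompleteSpace H]
    (C : Set H) (hclosed : IsClosed C) (hconv : Convex ℝ C)
    (T : H → H) (hT : Set.MapsTo T C C)
    (hne : ∀ u ∈ C, ∀ v ∈ C, ‖T u - T v‖ ≤ ‖u - v‖)
    (hfix : {q ∈ C | T q = q}.Nonempty)
    (α : ℕ → ℝ) (hα : ∀ n, α n ∈ Set.Ioo (0:ℝ) 1)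
    (δ : ℝ) (hδ : δ ∈ Set.Ioc (0:ℝ) 1) (hαδ : ∀ n, α n ≤ 1 - δ)
    (x y : ℕ → H) (x₀ : H) (hx₀ : x 0 = x₀) (hx₀C : x₀ ∈ C)
    (hy : ∀ n, y n = α n • x n + (1 - α n) • T (x n))
    (Cs Qs : ℕ → Set H)
    (hCs : ∀ n, Cs n = {v ∈ C | ‖y n - v‖ ≤ ‖x n - v‖})
    (hQs : ∀ n, Qs n = {v ∈ C | (inner ℝ (x₀ - x n) (x n - v) : ℝ) ≥ 0})
    (hxproj : ∀ n, x (n + 1) ∈ Cs n ∩ Qs n ∧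
        ∀ v ∈ Cs n ∩ Qs n, ‖x₀ - x (n + 1)‖ ≤ ‖x₀ - v‖) :
    ∃ q, (q ∈ C ∧ T q = q) ∧ (∀ p ∈ C, T p = p → ‖x₀ - q‖ ≤ ‖x₀ - p‖) ∧
      Filter.Tendsto x Filter.atTop (nhds q) :=
  nakajo_takahashi_strong_convergence_general H C hclosed hconv T hne hfix α hα δ hδ hαδ x y x₀ hx₀
    hx₀C hy Cs Qs hCs hQs hxproj
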